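/- Let α > 0 and 0 < β ≤ α/4, and define φ(x) = √(α/π) e^{-αx²}. Then for all real x and s, |e^{-β(x-s)²} - √(α/(α-β)) Σ_{k∈ℤ} e^{-(αβ/(α-β))(k-s)²} φ(x-k)| ≤ ε e^{-β(x-s)²}, where ε = θ₃(0, e^{-3π²/(4α)}) - 1. -/

import Mathlib

/-!
Completing the square turns the `k`-th summand into `√(α/π) e^{-β(x-s)²} e^{-A(k-c)²}` with
`A = α²/(α-β)` and `c = ((α-β)x + βs)/α`, so the error is `e^{-β(x-s)²}` times
`|1 - √(A/π) ∑ₖ e^{-A(k-c)²}|`. By Poisson summation `√(A/π) ∑ₖ e^{-A(k-c)²}` equals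
`∑ₙ e^{-π²n²/A} e^{2πinc}`, whose `n ≠ 0` terms have total modulus at most
`θ₃(0, e^{-π²/A}) - 1`. Finally `π²/A = (π²/α)(1 - β/α) ≥ 3π²/(4α)` and `θ₃(0, e^{-γ})` decreases
in `γ`.
-/

open Real

open scoped Complex

/-- `θ₃(0, e^{-t})` in Jacobi's notation. -/
noncomputable def theta3 (t : ℝ) : ℝ := ∑' n : ℤ, rexp (-t * (n : ℝ) ^ 2)

lemma summable_exp_neg_mul_int_sq {t : ℝ} (ht : 0 < t) :
    Summable fun n : ℤ => rexp (-t * (n : ℝ) ^ 2) := by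
  refine (summable_pow_mul_jacobiTheta₂_term_bound 0 (div_pos ht pi_pos) 0).congr fun n => ?_
  simp only [pow_zero, one_mul, mul_zero, zero_mul, sub_zero]
  congr 1
  field_simp

lemma antitoneOn_theta3 : AntitoneOn theta3 (Set.Ioi 0) := fun s hs t ht hst =>
  Summable.tsum_le_tsum
    (fun n => exp_le_exp.mpr (by nlinarith [sq_nonneg (n : ℝ)]))
    (summable_exp_neg_mul_int_sq ht) (summable_exp_neg_mul_int_sq hs)

lemma norm_tsum_sub_le_of_norm_le {ι E : Type*} [NormedAddCommGroup E] [CompleteSpace E]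
    {f : ι → E} {g : ι → ℝ} (hg : Summable g) (h : ∀ i, ‖f i‖ ≤ g i) (i₀ : ι) :
    ‖∑' i, f i - f i₀‖ ≤ ∑' i, g i - g i₀ := by
  classical
  rw [← (hasSum_ite_sub_hasSum (hg.of_norm_bounded h).hasSum i₀).tsum_eq]
  exact tsum_of_norm_bounded (hasSum_ite_sub_hasSum hg.hasSum i₀) fun i => by
    split_ifs <;> simp [h i]

lemma exp_neg_mul_sq_mul_exp_neg_mul_sq {a b : ℝ} (hab : a + b ≠ 0) (k s x : ℝ) :
    rexp (-a * (k - s) ^ 2) * rexp (-b * (x - k) ^ 2) =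
      rexp (-(a * b / (a + b)) * (x - s) ^ 2) *
        rexp (-(a + b) * (k - (a * s + b * x) / (a + b)) ^ 2) := by
  rw [← exp_add, ← exp_add]
  congr 1
  field_simp
  ring

lemma ofReal_sqrt_mul_tsum_exp_neg_mul_int_sub_sq {A : ℝ} (hA : 0 < A) (c : ℝ) :
    ((√(A / π) * ∑' k : ℤ, rexp (-A * (k - c) ^ 2) : ℝ) : ℂ) =
      ∑' n : ℤ, (rexp (-(π ^ 2 / A) * n ^ 2) : ℂ) * cexp ((2 * π * c * n : ℝ) * Complex.I) := by
  have ha : 0 < ((π / A : ℝ) : ℂ).re := by simpa using div_pos pi_pos hA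
  have poisson := Complex.tsum_exp_neg_quadratic ha (Complex.I * c)
  have hsqrt : ((π / A : ℝ) : ℂ) ^ (1 / 2 : ℂ) = (√(π / A) : ℂ) := by
    rw [sqrt_eq_rpow, Complex.ofReal_cpow (by positivity)]
    norm_num
  have hlhs : ∀ n : ℤ, cexp (-π * ((π / A : ℝ) : ℂ) * n ^ 2 + 2 * π * (Complex.I * c) * n) =
      (rexp (-(π ^ 2 / A) * n ^ 2) : ℂ) * cexp ((2 * π * c * n : ℝ) * Complex.I) := by
    intro n
    rw [Complex.ofReal_exp, ← Complex.exp_add]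
    push_cast
    ring_nf
  have hrhs : ∀ n : ℤ, cexp (-π / ((π / A : ℝ) : ℂ) * (n + Complex.I * (Complex.I * c)) ^ 2) =
      (rexp (-A * (n - c) ^ 2) : ℂ) := by
    intro n
    rw [Complex.ofReal_exp]
    congr 1
    push_cast
    field_simp
    ring_nf
    simp
  simp only [hlhs, hrhs, hsqrt] at poisson
  rw [poisson, Complex.ofReal_mul, Complex.ofReal_tsum, sqrt_div' _ pi_pos.le, sqrt_div' _ hA.le]
  push_cast
  field_simp

lemma abs_one_sub_sqrt_mul_tsum_exp_neg_mul_int_sub_sq_le {A : ℝ} (hA : 0 < A) (c : ℝ) :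
    |1 - √(A / π) * ∑' k : ℤ, rexp (-A * (k - c) ^ 2)| ≤ theta3 (π ^ 2 / A) - 1 := by
  have h := norm_tsum_sub_le_of_norm_le
    (summable_exp_neg_mul_int_sq (t := π ^ 2 / A) (by positivity))
    (f := fun n : ℤ => (rexp (-(π ^ 2 / A) * n ^ 2) : ℂ) * cexp ((2 * π * c * n : ℝ) * Complex.I))
    (fun n => by rw [norm_mul, Complex.norm_exp_ofReal_mul_I, mul_one, Complex.norm_real,
      norm_of_nonneg (exp_pos _).le]) 0
  rw [← ofReal_sqrt_mul_tsum_exp_neg_mul_int_sub_sq hA c] at h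
  simp only [Int.cast_zero, ne_eq, OfNat.ofNat_ne_zero, not_false_eq_true, zero_pow, mul_zero,
    exp_zero, Complex.ofReal_one, Complex.ofReal_zero, zero_mul, Complex.exp_zero, mul_one] at h
  rw [← Complex.ofReal_one, ← Complex.ofReal_sub, Complex.norm_real, norm_eq_abs] at h
  rwa [abs_sub_comm]

theorem abs_exp_neg_mul_sq_sub_tsum_gaussian_le {α β : ℝ} (hα : 0 < α) (hβα : β < α) (x s : ℝ) :
    |rexp (-β * (x - s) ^ 2) -
        √(α / (α - β)) *
          ∑' k : ℤ, rexp (-(α * β / (α - β)) * ((k : ℝ) - s) ^ 2) *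
            (√(α / π) * rexp (-α * (x - (k : ℝ)) ^ 2))| ≤
      (theta3 (π ^ 2 / α * (1 - β / α)) - 1) * rexp (-β * (x - s) ^ 2) := by
  have hαβ : 0 < α - β := sub_pos.mpr hβα
  set A := α ^ 2 / (α - β)
  set c := ((α - β) * x + β * s) / α
  have hA : 0 < A := by positivity
  have hterm : ∀ k : ℤ, rexp (-(α * β / (α - β)) * ((k : ℝ) - s) ^ 2) *
      (√(α / π) * rexp (-α * (x - (k : ℝ)) ^ 2)) =
      √(α / π) * rexp (-β * (x - s) ^ 2) * rexp (-A * (k - c) ^ 2) := by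
    intro k
    have hsum : α * β / (α - β) + α = A := by simp only [A]; field_simp; ring
    have h := exp_neg_mul_sq_mul_exp_neg_mul_sq (hsum ▸ hA.ne') k s x
    rw [hsum, show α * β / (α - β) * α / A = β by simp only [A]; field_simp,
      show (α * β / (α - β) * s + α * x) / A = c by simp only [A, c]; field_simp; ring] at h
    rw [mul_left_comm, h]
    ring
  have hsqrt : √(α / (α - β)) * √(α / π) = √(A / π) := by
    rw [← sqrt_mul (by positivity)]
    congr 1
    simp only [A]
    field_simp
  rw [tsum_congr hterm, tsum_mul_left, ← mul_assoc, ← mul_assoc, hsqrt,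
    show π ^ 2 / α * (1 - β / α) = π ^ 2 / A by simp only [A]; field_simp]
  calc _ = |1 - √(A / π) * ∑' k : ℤ, rexp (-A * (k - c) ^ 2)| * |rexp (-β * (x - s) ^ 2)| := by
        rw [← abs_mul]
        congr 1
        ring
    _ ≤ _ := by
        rw [abs_of_pos (exp_pos _)]
        gcongr
        exact abs_one_sub_sqrt_mul_tsum_exp_neg_mul_int_sub_sq_le hA c

theorem gaussian_gmra_approximation_general (α β : ℝ) (hα : 0 < α) (hβα : β ≤ α / 4)
    (x s : ℝ) :
    |Real.exp (-β * (x - s)^2) -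
        Real.sqrt (α / (α - β)) *
          ∑' k : ℤ, Real.exp (-(α * β / (α - β)) * ((k : ℝ) - s)^2) *
            (Real.sqrt (α / π) * Real.exp (-α * (x - (k : ℝ))^2))| ≤
      ((∑' n : ℤ, Real.exp (-(3 * π^2 / (4 * α)) * (n : ℝ)^2)) - 1) *
        Real.exp (-β * (x - s)^2) := by
  have hγ : 3 * π ^ 2 / (4 * α) ≤ π ^ 2 / α * (1 - β / α) := by
    have hβα' : β / α ≤ 1 / 4 := by rw [div_le_iff₀ hα]; linarith
    calc 3 * π ^ 2 / (4 * α) = π ^ 2 / α * (1 - 1 / 4) := by field_simp; ring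
      _ ≤ π ^ 2 / α * (1 - β / α) := by gcongr
  calc _ ≤ (theta3 (π ^ 2 / α * (1 - β / α)) - 1) * rexp (-β * (x - s) ^ 2) :=
        abs_exp_neg_mul_sq_sub_tsum_gaussian_le hα (by linarith) x s
    _ ≤ (theta3 (3 * π ^ 2 / (4 * α)) - 1) * rexp (-β * (x - s) ^ 2) := by
        gcongr
        have hγ₀ : 0 < 3 * π ^ 2 / (4 * α) := by positivity
        exact antitoneOn_theta3 hγ₀ (hγ₀.trans_le hγ) hγ

theorem gaussian_gmra_approximation (α β : ℝ) (hα : 0 < α) (hβ : 0 < β) (hβα : β ≤ α / 4)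
    (x s : ℝ) :
    |Real.exp (-β * (x - s)^2) -
        Real.sqrt (α / (α - β)) *
          ∑' k : ℤ, Real.exp (-(α * β / (α - β)) * ((k : ℝ) - s)^2) *
            (Real.sqrt (α / π) * Real.exp (-α * (x - (k : ℝ))^2))| ≤
      ((∑' n : ℤ, Real.exp (-(3 * π^2 / (4 * α)) * (n : ℝ)^2)) - 1) *
        Real.exp (-β * (x - s)^2) :=
  gaussian_gmra_approximation_general α β hα hβα x s
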